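/- Let G and H be finite connected simple graphs with at least two vertices each. Then gon(G □ H) ≤ ⌊(g(G □ H) + 3)/2⌋, where g denotes the genus of the graph. -/

import Mathlib

open Finset
open scoped Classical

namespace SimpleGraph

variable {V : Type*}

/-- A divisor `D : V → ℤ` is effective if all its values are nonnegative. -/
def Effective (D : V → ℤ) : Prop := ∀ v, 0 ≤ D v

/-- The Laplacian of `G` applied to `x : V → ℤ`:
`(lap G x) v = deg(v)·x(v) − ∑_{u ~ v} x(u) = ∑_{u ~ v} (x v − x u)`. -/
noncomputable def lap [Fintype V] (G : SimpleGraph V) (x : V → ℤ) : V → ℤ :=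
  fun v => ∑ u, if G.Adj v u then x v - x u else 0

/-- Two divisors are (linearly) equivalent if they differ by a Laplacian image. -/
def LinEquiv [Fintype V] (G : SimpleGraph V) (D D' : V → ℤ) : Prop :=
  ∃ x : V → ℤ, D - D' = G.lap x

/-- A divisor has positive rank if for every vertex `v`, subtracting one chip at `v`
yields a divisor equivalent to an effective divisor. -/
def PosRank [Fintype V] (G : SimpleGraph V) (D : V → ℤ) : Prop :=
  ∀ v : V, ∃ E : V → ℤ, Effective E ∧
    G.LinEquiv (D - fun u => if u = v then (1 : ℤ) else 0) E

/-- The gonality of `G`: the minimum degree of an effective divisor of positive rank. -/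
noncomputable def gonality [Fintype V] (G : SimpleGraph V) : ℕ :=
  sInf {n : ℕ | ∃ D : V → ℤ, Effective D ∧ G.PosRank D ∧ (∑ v, D v) = (n : ℤ)}

/-- The genus of `G`: `|E| − |V| + 1`. -/
noncomputable def genus [Fintype V] (G : SimpleGraph V) : ℤ :=
  (Nat.card G.edgeSet : ℤ) - (Fintype.card V : ℤ) + 1

end SimpleGraph

open SimpleGraph

/-! A `q`-reduced divisor `D` (Baker–Norine) carries at most `g` chips away from `q`: removing
the vertices of `V ∖ {q}` one at a time, each time one that cannot fire, every removed `v` has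
`D v + 1` at most its number of edges to `q` or to vertices removed before it, so
`∑_{v ≠ q} (D v + 1) ≤ |E|`. Every divisor out of debt away from `q` is equivalent to a
`q`-reduced one, so such a divisor of degree `≥ g` is equivalent to an effective one; applied to
`(g + 1) q - v` this gives `gon G ≤ g(G) + 1`.

Pulling a positive-rank divisor back along `G □ H → G` multiplies its degree by `|W|`, so
`gon (G □ H) ≤ min (|W| (g(G) + 1)) (|V| (g(H) + 1))`. As
`g(G □ H) = |W| (g(G) - 1) + |V| (g(H) - 1) + |V| |W| + 1`, the sum of the two bounds falls short
of `g(G □ H) + 3` by `(|V| - 2) (|W| - 2) ≥ 0`. -/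

namespace SimpleGraph

lemma Walk.le_add_length_mul {V : Type*} {G : SimpleGraph V} {f : V → ℤ} {B : ℤ}
    (h : ∀ a b, G.Adj a b → f a ≤ f b + B) {u v : V} (p : G.Walk u v) :
    f u ≤ f v + p.length * B := by
  induction p with
  | nil => simp
  | cons hadj p ih =>
    rw [Walk.length_cons]
    push_cast
    linarith [h _ _ hadj]

variable {V : Type*} [Fintype V] (G : SimpleGraph V)

lemma genus_eq_card_edgeFinset : G.genus = #G.edgeFinset - Fintype.card V + 1 := by
  rw [genus, Nat.card_eq_fintype_card, edgeFinset_card]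

lemma lap_apply_eq_sum_neighborFinset (x : V → ℤ) (v : V) :
    G.lap x v = ∑ u ∈ G.neighborFinset v, (x v - x u) := by
  rw [lap, ← sum_filter, neighborFinset_eq_filter]

lemma lap_add (x y : V → ℤ) : G.lap (x + y) = G.lap x + G.lap y := by
  funext v
  simp only [lap, Pi.add_apply, ← sum_add_distrib]
  refine sum_congr rfl fun u _ => ?_
  split_ifs <;> ring

lemma sum_lap_eq_sum_compl (x : V → ℤ) (S : Finset V) :
    ∑ v ∈ S, G.lap x v = ∑ v ∈ S, ∑ u ∈ Sᶜ, if G.Adj v u then x v - x u else 0 := by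
  set f : V → V → ℤ := fun v u => if G.Adj v u then x v - x u else 0
  have hinner : ∑ v ∈ S, ∑ u ∈ S, f v u = 0 := by
    have hanti : ∀ v u, f v u = -f u v := fun v u => by
      simp only [f, G.adj_comm u v]
      split_ifs <;> ring
    have : ∑ v ∈ S, ∑ u ∈ S, f v u = -∑ v ∈ S, ∑ u ∈ S, f v u := by
      conv_lhs => rw [sum_comm]
      simp only [← sum_neg_distrib]
      exact sum_congr rfl fun u _ => sum_congr rfl fun v _ => hanti v u
    linarith
  calc ∑ v ∈ S, G.lap x v = ∑ v ∈ S, (∑ u ∈ S, f v u + ∑ u ∈ Sᶜ, f v u) :=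
        sum_congr rfl fun v _ => (sum_add_sum_compl S _).symm
    _ = ∑ v ∈ S, ∑ u ∈ Sᶜ, f v u := by rw [sum_add_distrib, hinner, zero_add]

lemma sum_lap_eq_zero (x : V → ℤ) : ∑ v, G.lap x v = 0 := by
  simpa using G.sum_lap_eq_sum_compl x univ

noncomputable def outdeg (S : Finset V) (v : V) : ℤ := ∑ u ∈ Sᶜ, if G.Adj v u then 1 else 0

lemma outdeg_univ (v : V) : G.outdeg univ v = 0 := by simp [outdeg]

lemma outdeg_erase {S : Finset V} {v : V} (hv : v ∈ S) (w : V) :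
    G.outdeg (S.erase v) w = G.outdeg S w + if G.Adj w v then 1 else 0 := by
  rw [outdeg, outdeg, compl_erase, sum_insert (by simpa), add_comm]

lemma degree_eq_sum_ite (v : V) : (G.degree v : ℤ) = ∑ u, if G.Adj v u then 1 else 0 := by
  rw [← card_neighborFinset_eq_degree, neighborFinset_eq_filter, sum_boole]

lemma degree_eq_sum_erase_add_outdeg {S : Finset V} {v : V} (hv : v ∈ S) :
    (G.degree v : ℤ) = ∑ u ∈ S.erase v, (if G.Adj v u then 1 else 0) + G.outdeg S v := by
  rw [outdeg, degree_eq_sum_ite, ← sum_add_sum_compl S, ← add_sum_erase S _ hv]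
  simp

lemma sum_erase_degree_add_outdeg (q : V) :
    ∑ v ∈ univ.erase q, ((G.degree v : ℤ) + G.outdeg (univ.erase q) v) =
      2 * #G.edgeFinset := by
  have hdeg : ∑ v ∈ univ.erase q, (if G.Adj v q then (1 : ℤ) else 0) = G.degree q := by
    rw [degree_eq_sum_ite, ← add_sum_erase _ _ (mem_univ q)]
    simp [G.adj_comm]
  simp only [G.outdeg_erase (mem_univ q), outdeg_univ, zero_add, sum_add_distrib, hdeg]
  rw [sum_erase_add _ _ (mem_univ q)]
  exact_mod_cast G.sum_degrees_eq_twice_card_edges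

lemma lap_indicator_of_mem {S : Finset V} {v : V} (hv : v ∈ S) :
    G.lap (fun u => if u ∈ S then 1 else 0) v = G.outdeg S v := by
  rw [lap, outdeg, ← sum_add_sum_compl S, sum_eq_zero fun u hu => by simp [hv, hu], zero_add]
  exact sum_congr rfl fun u hu => by simp [hv, mem_compl.1 hu]

lemma lap_indicator_nonpos_of_notMem {S : Finset V} {v : V} (hv : v ∉ S) :
    G.lap (fun u => if u ∈ S then 1 else 0) v ≤ 0 :=
  sum_nonpos fun u _ => by
    by_cases hu : u ∈ S <;> by_cases h : G.Adj v u <;> simp [hv, hu, h]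

/-- Baker–Norine's `q`-reduced divisors. -/
def IsReduced (q : V) (D : V → ℤ) : Prop :=
  (∀ v ≠ q, 0 ≤ D v) ∧
    ∀ S : Finset V, S.Nonempty → q ∉ S → ∃ v ∈ S, D v < G.outdeg S v

variable {G}

lemma LinEquiv.sum_eq {D E : V → ℤ} (h : G.LinEquiv D E) :
    ∑ v, D v = ∑ v, E v := by
  obtain ⟨x, hx⟩ := h
  have := G.sum_lap_eq_zero x
  rw [← hx] at this
  simpa [sum_sub_distrib, sub_eq_zero] using this

lemma Effective.sum_nonneg {D : V → ℤ} (hD : Effective D) : 0 ≤ ∑ v, D v :=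
  Finset.sum_nonneg fun v _ => hD v

lemma sub_le_sum_erase_of_adj {q : V} {D x : V → ℤ} (hD : ∀ v ≠ q, 0 ≤ D v)
    (hq : ∀ v, x q ≤ x v) (hx : ∀ v ≠ q, G.lap x v ≤ D v) {a b : V} (hab : G.Adj a b) :
    x a - x b ≤ ∑ v ∈ univ.erase q, D v := by
  have hB : 0 ≤ ∑ v ∈ univ.erase q, D v := sum_nonneg fun v hv => hD v (ne_of_mem_erase hv)
  let S : Finset V := {t | x b < x t}
  by_cases ha : a ∈ S
  swap
  · simp only [S, mem_filter, mem_univ, true_and, not_lt] at ha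
    linarith
  have hqS : q ∉ S := by simpa [S] using hq b
  have hnonneg : ∀ v ∈ S, ∀ u ∈ Sᶜ, 0 ≤ if G.Adj v u then x v - x u else 0 := by
    intro v hv u hu
    simp only [S, mem_compl, mem_filter, mem_univ, true_and, not_lt] at hv hu
    split_ifs <;> omega
  calc x a - x b = if G.Adj a b then x a - x b else 0 := (if_pos hab).symm
    _ ≤ ∑ u ∈ Sᶜ, if G.Adj a u then x a - x u else 0 :=
        single_le_sum (hnonneg a ha) (by simp [S])
    _ ≤ ∑ v ∈ S, ∑ u ∈ Sᶜ, if G.Adj v u then x v - x u else 0 :=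
        single_le_sum (fun v hv => sum_nonneg (hnonneg v hv)) ha
    _ = ∑ v ∈ S, G.lap x v := (G.sum_lap_eq_sum_compl x S).symm
    _ ≤ ∑ v ∈ S, D v := sum_le_sum fun v hv => hx v (ne_of_mem_of_not_mem hv hqS)
    _ ≤ ∑ v ∈ univ.erase q, D v :=
        sum_le_sum_of_subset_of_nonneg
          (fun v hv => mem_erase.2 ⟨ne_of_mem_of_not_mem hv hqS, mem_univ v⟩)
          fun v hv _ => hD v (ne_of_mem_erase hv)

theorem exists_linEquiv_isReduced (hG : G.Connected) {q : V} {D : V → ℤ}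
    (hD : ∀ v ≠ q, 0 ≤ D v) : ∃ E, G.LinEquiv D E ∧ G.IsReduced q E := by
  -- scripts that never fire `q` and keep `D - lap x` out of debt away from `q`; by
  -- `sub_le_sum_erase_of_adj` such a script grows by at most `B` along each edge
  let P : (V → ℤ) → Prop := fun x =>
    x q = 0 ∧ (∀ v, 0 ≤ x v) ∧ ∀ v ≠ q, G.lap x v ≤ D v
  let B := ∑ v ∈ univ.erase q, D v
  have hbdd : ∀ x, P x →
      ∑ v, x v ≤ ∑ v, ((hG.preconnected v q).some.length : ℤ) * B := by
    rintro x ⟨hxq, hx0, hx⟩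
    refine sum_le_sum fun v _ => ?_
    have := (hG.preconnected v q).some.le_add_length_mul (f := x) (B := B) fun a b hab => by
      linarith [sub_le_sum_erase_of_adj hD (fun v => by rw [hxq]; exact hx0 v) hx hab]
    linarith
  have hP0 : P 0 := ⟨rfl, fun _ => le_rfl, fun v hv => by simpa [lap] using hD v hv⟩
  obtain ⟨_, ⟨x, ⟨hxq, hx0, hx⟩, rfl⟩, hmax⟩ :=
    Int.exists_greatest_of_bdd (P := fun s => ∃ x, P x ∧ ∑ v, x v = s)
      ⟨_, by rintro _ ⟨x, hx, rfl⟩; exact hbdd x hx⟩ ⟨0, 0, hP0, by simp⟩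
  refine ⟨D - G.lap x, ⟨x, by abel⟩, fun v hv => sub_nonneg.2 (hx v hv), fun S hS hqS => ?_⟩
  by_contra! hlegal
  -- if `S` could fire legally, firing it too would give a script in `P` of larger total
  let y : V → ℤ := x + fun u => if u ∈ S then 1 else 0
  have hy : P y := by
    refine ⟨by simp [y, hxq, hqS], fun v => ?_, fun v hv => ?_⟩
    · have := hx0 v
      simp only [y, Pi.add_apply]
      split_ifs <;> omega
    · simp only [y, G.lap_add, Pi.add_apply]
      by_cases hvS : v ∈ S
      · have h : G.outdeg S v ≤ D v - G.lap x v := hlegal v hvS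
        linarith [G.lap_indicator_of_mem hvS]
      · linarith [G.lap_indicator_nonpos_of_notMem hvS, hx v hv]
  have hsum : ∑ v, y v = ∑ v, x v + #S := by simp [y, sum_add_distrib]
  linarith [hmax _ ⟨y, hy, rfl⟩, hS.card_pos]

/-- The right side is twice the number of edges meeting `S`. -/
lemma IsReduced.two_mul_sum_add_one_le {q : V} {E : V → ℤ} (hE : G.IsReduced q E)
    {S : Finset V} (hqS : q ∉ S) :
    2 * ∑ v ∈ S, (E v + 1) ≤ ∑ v ∈ S, (G.degree v + G.outdeg S v) := by
  induction S using Finset.strongInduction with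
  | H S ih =>
  rcases S.eq_empty_or_nonempty with rfl | hS
  · simp
  obtain ⟨v, hv, hEv⟩ := hE.2 S hS hqS
  have ih' := ih (S.erase v) (erase_ssubset hv) fun h => hqS (mem_of_mem_erase h)
  have hrhs : ∑ w ∈ S, (G.degree w + G.outdeg S w) =
      ∑ w ∈ S.erase v, (G.degree w + G.outdeg (S.erase v) w) + 2 * G.outdeg S v := by
    have hsymm : ∑ w ∈ S.erase v, (if G.Adj w v then (1 : ℤ) else 0) =
        ∑ w ∈ S.erase v, if G.Adj v w then 1 else 0 :=
      sum_congr rfl fun w _ => by rw [G.adj_comm]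
    rw [← add_sum_erase S _ hv, G.degree_eq_sum_erase_add_outdeg hv]
    simp only [G.outdeg_erase hv, sum_add_distrib, hsymm]
    ring
  rw [← add_sum_erase S _ hv, hrhs]
  linarith

lemma IsReduced.sum_erase_le_genus {q : V} {E : V → ℤ} (hE : G.IsReduced q E) :
    ∑ v ∈ univ.erase q, E v ≤ G.genus := by
  have h := hE.two_mul_sum_add_one_le (notMem_erase q univ)
  have hcard : 1 ≤ Fintype.card V := Fintype.card_pos_iff.2 ⟨q⟩
  rw [G.sum_erase_degree_add_outdeg q, sum_add_distrib, sum_const,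
    card_erase_of_mem (mem_univ q), card_univ, nsmul_eq_mul, Nat.cast_sub hcard, Nat.cast_one,
    mul_one] at h
  rw [genus_eq_card_edgeFinset]
  linarith

theorem exists_effective_linEquiv (hG : G.Connected) {q : V} {D : V → ℤ}
    (hD : ∀ v ≠ q, 0 ≤ D v) (hdeg : G.genus ≤ ∑ v, D v) :
    ∃ E, Effective E ∧ G.LinEquiv D E := by
  obtain ⟨E, hDE, hE⟩ := exists_linEquiv_isReduced hG hD
  have hq : 0 ≤ E q := by
    rw [hDE.sum_eq, ← sum_erase_add _ _ (mem_univ q)] at hdeg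
    linarith [hE.sum_erase_le_genus]
  exact ⟨E, fun v => if h : v = q then h ▸ hq else hE.1 v h, hDE⟩

lemma genus_nonneg (hG : G.Connected) : 0 ≤ G.genus := by
  have := hG.card_vert_le_card_edgeSet_add_one
  rw [Nat.card_eq_fintype_card] at this
  rw [genus]
  omega

theorem exists_posRank_sum_eq_genus_add_one (hG : G.Connected) :
    ∃ D, Effective D ∧ G.PosRank D ∧ ∑ v, D v = G.genus + 1 := by
  obtain ⟨q⟩ := hG.nonempty
  have hg := genus_nonneg hG
  refine ⟨fun u => if u = q then G.genus + 1 else 0,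
    fun u => by dsimp only; split_ifs <;> omega,
    fun v => exists_effective_linEquiv hG (q := v) (fun u hu => ?_) ?_, by simp⟩
  · simp only [Pi.sub_apply, if_neg hu, sub_zero]
    split_ifs <;> omega
  · simp [sum_sub_distrib]

lemma gonality_le {D : V → ℤ} {n : ℕ} (hD : Effective D) (hpos : G.PosRank D)
    (hdeg : ∑ v, D v = n) : G.gonality ≤ n :=
  Nat.sInf_le ⟨D, hD, hpos, hdeg⟩

theorem gonality_le_genus_add_one (hG : G.Connected) : (G.gonality : ℤ) ≤ G.genus + 1 := by
  obtain ⟨D, hD, hpos, hdeg⟩ := exists_posRank_sum_eq_genus_add_one hG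
  have := gonality_le hD hpos (Int.toNat_of_nonneg hD.sum_nonneg).symm
  have := hD.sum_nonneg
  omega

theorem exists_posRank_sum_eq_gonality (hG : G.Connected) :
    ∃ D, Effective D ∧ G.PosRank D ∧ ∑ v, D v = G.gonality := by
  obtain ⟨D, hD, hpos, -⟩ := exists_posRank_sum_eq_genus_add_one hG
  exact Nat.sInf_mem
    (s := {n : ℕ | ∃ D : V → ℤ, Effective D ∧ G.PosRank D ∧ ∑ v, D v = n})
    ⟨_, D, hD, hpos, (Int.toNat_of_nonneg hD.sum_nonneg).symm⟩

theorem PosRank.comp {W : Type*} [Fintype W] {H : SimpleGraph W} {f : W → V}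
    (hf : ∀ x : V → ℤ, H.lap (x ∘ f) = G.lap x ∘ f) {D : V → ℤ} (hD : G.PosRank D) :
    H.PosRank (D ∘ f) := by
  intro w
  obtain ⟨E, hE, x, hx⟩ := hD (f w)
  refine ⟨fun u => E (f u) + (if f u = f w then 1 else 0) - (if u = w then 1 else 0),
    fun u => ?_, x ∘ f, ?_⟩
  · have := hE (f u)
    by_cases h : u = w
    · subst h
      simpa using this
    · simp only [if_neg h]
      split_ifs <;> omega
  · rw [hf, ← hx]
    funext u
    simp only [Pi.sub_apply, Function.comp_apply]
    ring

variable (G) {W : Type*} [Fintype W] (H : SimpleGraph W)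

lemma lap_boxProd_comp_fst (x : V → ℤ) :
    (G □ H).lap (x ∘ Prod.fst) = G.lap x ∘ Prod.fst := by
  funext p
  simp only [Function.comp_apply, lap_apply_eq_sum_neighborFinset, neighborFinset_boxProd,
    sum_disjUnion, sum_product, sum_singleton, sub_self, sum_const_zero, add_zero]

lemma lap_boxProd_comp_snd (x : W → ℤ) :
    (G □ H).lap (x ∘ Prod.snd) = H.lap x ∘ Prod.snd := by
  funext p
  simp only [Function.comp_apply, lap_apply_eq_sum_neighborFinset, neighborFinset_boxProd,
    sum_disjUnion, sum_product, sum_singleton, sub_self, sum_const_zero, zero_add]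

variable {G H}

theorem gonality_boxProd_le_left (hG : G.Connected) :
    (G □ H).gonality ≤ Fintype.card W * G.gonality := by
  obtain ⟨D, hD, hpos, hdeg⟩ := exists_posRank_sum_eq_gonality hG
  refine gonality_le (fun p => hD p.1) (hpos.comp (G.lap_boxProd_comp_fst H)) ?_
  simp [Fintype.sum_prod_type, ← mul_sum, hdeg]

theorem gonality_boxProd_le_right (hH : H.Connected) :
    (G □ H).gonality ≤ Fintype.card V * H.gonality := by
  obtain ⟨D, hD, hpos, hdeg⟩ := exists_posRank_sum_eq_gonality hH
  refine gonality_le (fun p => hD p.2) (hpos.comp (G.lap_boxProd_comp_snd H)) ?_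
  simp [Fintype.sum_prod_type, hdeg]

variable (G H)

lemma card_edgeFinset_boxProd :
    #(G □ H).edgeFinset = Fintype.card W * #G.edgeFinset + Fintype.card V * #H.edgeFinset := by
  have := (G □ H).sum_degrees_eq_twice_card_edges
  simp only [degree_boxProd, Fintype.sum_prod_type] at this
  change ∑ v : V, ∑ w : W, (G.degree v + H.degree w) = 2 * #(G □ H).edgeFinset at this
  simp only [sum_add_distrib, sum_const, card_univ, smul_eq_mul, ← mul_sum,
    sum_degrees_eq_twice_card_edges] at this
  linarith

lemma genus_boxProd : (G □ H).genus = Fintype.card W * (G.genus - 1) +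
    Fintype.card V * (H.genus - 1) + Fintype.card V * Fintype.card W + 1 := by
  simp only [genus_eq_card_edgeFinset, card_edgeFinset_boxProd, Fintype.card_prod]
  push_cast
  ring

end SimpleGraph

theorem gonality_boxProd_le_genus {V W : Type*} [Fintype V] [Fintype W]
    (G : SimpleGraph V) (H : SimpleGraph W) (hG : G.Connected) (hH : H.Connected)
    (hV : 2 ≤ Fintype.card V) (hW : 2 ≤ Fintype.card W) :
    ((G □ H).gonality : ℤ) ≤ ((G □ H).genus + 3) / 2 := by
  have hleft : ((G □ H).gonality : ℤ) ≤ Fintype.card W * (G.genus + 1) :=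
    calc ((G □ H).gonality : ℤ) ≤ Fintype.card W * G.gonality := by
          exact_mod_cast gonality_boxProd_le_left (H := H) hG
      _ ≤ Fintype.card W * (G.genus + 1) := by gcongr; exact gonality_le_genus_add_one hG
  have hright : ((G □ H).gonality : ℤ) ≤ Fintype.card V * (H.genus + 1) :=
    calc ((G □ H).gonality : ℤ) ≤ Fintype.card V * H.gonality := by
          exact_mod_cast gonality_boxProd_le_right (G := G) hH
      _ ≤ Fintype.card V * (H.genus + 1) := by gcongr; exact gonality_le_genus_add_one hH
  have hslack : 0 ≤ ((Fintype.card V : ℤ) - 2) * ((Fintype.card W : ℤ) - 2) :=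
    mul_nonneg (by omega) (by omega)
  rw [Int.le_ediv_iff_mul_le two_pos, genus_boxProd]
  linarith
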